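/- Let p be an odd prime. If λ is a BG-partition, then λ^(1)*, the partition obtained from λ by removing its p-rim*, is also a BG-partition. -/

import Mathlib

/-!
Reading the `p`-rim row by row, row `i` of `λ` loses the columns `[e i, λ i)`, where
`e i = pRimLeft p f i` depends on how many nodes of the current `p`-segment lie in the rows
above; `e` is again a partition. Removing the `p`-rim* keeps the diagram of `e` on and above the
diagonal and reflects it, so `λ^(1)*` is self-conjugate with diagonal hooks `2 (e i - i) - 1`.
If the whole rim of row `i` lies in the `p`-rim, then `e i = λ (i + 1) - 1` and this is the
diagonal hook of `λ` at row `i + 1`. Otherwise a `p`-segment ends in row `i`; it started in some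
row `r ≤ i`, and the diagonal hook of `λ` at row `r` exceeds `2 (e i - i) - 1` by exactly `2 p`.
Either way `p` does not divide it.
-/

namespace Mull

/-- A partition of a natural number, encoded as the (0-indexed) weakly decreasing,
eventually-zero sequence of its row lengths.  The Young diagram of `f` is the set
of (0-indexed) nodes `(i, j)` with `j < f i`. -/
def IsPartition (f : ℕ → ℕ) : Prop :=
  Antitone f ∧ ∃ N, f N = 0

/-- The number of nonzero rows of `f`. -/
noncomputable def len (f : ℕ → ℕ) : ℕ :=
  sInf {N | f N = 0}

/-- The size (number of nodes) of `f`. -/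
noncomputable def size (f : ℕ → ℕ) : ℕ :=
  ∑ i ∈ Finset.range (len f), f i

/-- The conjugate (transpose) partition: `conj f j` is the number of rows `i`
with `f i > j`, i.e. the length of the `j`-th column. -/
noncomputable def conj (f : ℕ → ℕ) : ℕ → ℕ :=
  fun j => Nat.card {i | j < f i}

/-- A partition is self-conjugate if it equals its conjugate. -/
def SelfConj (f : ℕ → ℕ) : Prop :=
  conj f = f

/-- The hook length of `f` at the (0-indexed) node `(i, j)`:
in 1-indexed terms this is `λ_i + λ'_j - i - j + 1`. -/
noncomputable def hook (f : ℕ → ℕ) (i j : ℕ) : ℕ :=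
  f i + conj f j - i - j - 1

/-- A BG-partition: a self-conjugate partition none of whose diagonal hook lengths
is divisible by `p`. -/
def IsBG (p : ℕ) (f : ℕ → ℕ) : Prop :=
  IsPartition f ∧ SelfConj f ∧ ∀ i, i < f i → ¬ p ∣ hook f i i

/-- A partition is `p`-regular if it does not have `p` equal nonzero parts. -/
def IsRegular (p : ℕ) (f : ℕ → ℕ) : Prop :=
  ∀ i, f (i + (p - 1)) ≠ 0 → f i ≠ f (i + (p - 1))

/-- The list of nodes of the rim of `f` (nodes `(i, j)` of the diagram such that
`(i+1, j+1)` is not in the diagram), listed from the top right to the bottom left. -/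
noncomputable def rimList (f : ℕ → ℕ) : List (ℕ × ℕ) :=
  (List.range (len f)).flatMap fun i =>
    (List.range (f i - (f (i + 1) - 1))).map fun k => (i, f i - 1 - k)

/-- Auxiliary selection of the `p`-rim from the ordered list of rim nodes (with fuel):
take the next `p`-segment (the next `p` rim nodes), then, if the last selected node is
not in the bottom row, skip the remaining rim nodes lying in the row of the last
selected node and continue from the next row. -/
def pRimAux (p : ℕ) : ℕ → List (ℕ × ℕ) → List (ℕ × ℕ)
  | 0, _ => []
  | _ + 1, [] => []
  | fuel + 1, c :: L =>
    (c :: L).take p ++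
      pRimAux p fuel (((c :: L).drop p).filter
        fun d => (((c :: L).take p).getLastD c).1 < d.1)

/-- The list of nodes of the `p`-rim of `f`, from the top right to the bottom left. -/
noncomputable def pRimList (p : ℕ) (f : ℕ → ℕ) : List (ℕ × ℕ) :=
  pRimAux p (rimList f).length (rimList f)

/-- `f` minus its `p`-rim. -/
noncomputable def removeRim (p : ℕ) (f : ℕ → ℕ) : ℕ → ℕ :=
  fun i => f i - ((pRimList p f).filter fun c => c.1 = i).length

/-- The number of columns of the Mullineux symbol of `f` (i.e. `l + 1`), namely the
number of times the `p`-rim must be removed to reach the empty partition. -/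
noncomputable def steps (p : ℕ) (f : ℕ → ℕ) : ℕ :=
  sInf {k | len ((removeRim p)^[k] f) = 0}

/-- `a_i`: the number of nodes of the `p`-rim of `λ^(i)`. -/
noncomputable def aSeq (p : ℕ) (f : ℕ → ℕ) (i : ℕ) : ℕ :=
  (pRimList p ((removeRim p)^[i] f)).length

/-- `r_i`: the number of nonzero rows of `λ^(i)`. -/
noncomputable def rSeq (p : ℕ) (f : ℕ → ℕ) (i : ℕ) : ℕ :=
  len ((removeRim p)^[i] f)

/-- `ε_i`: `0` if `p ∣ a_i` and `1` otherwise. -/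
noncomputable def epsSeq (p : ℕ) (f : ℕ → ℕ) (i : ℕ) : ℕ :=
  if p ∣ aSeq p f i then 0 else 1

/-- The Mullineux symbol of `f`, recorded as the list of its columns
`(a_i, r_i)` for `0 ≤ i ≤ l`. -/
noncomputable def GSymb (p : ℕ) (f : ℕ → ℕ) : List (ℕ × ℕ) :=
  (List.range (steps p f)).map fun i => (aSeq p f i, rSeq p f i)

/-- The effect of the Mullineux map on one column of the Mullineux symbol:
`(a_i, r_i) ↦ (a_i, s_i)` where `s_i = a_i + ε_i - r_i`. -/
def mullCol (p : ℕ) (c : ℕ × ℕ) : ℕ × ℕ :=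
  (c.1, c.1 + (if p ∣ c.1 then 0 else 1) - c.2)

/-- `f` is a self-Mullineux partition: a `p`-regular partition fixed by the Mullineux
map, i.e. every column of its Mullineux symbol is fixed by `mullCol`. -/
def SelfMull (p : ℕ) (f : ℕ → ℕ) : Prop :=
  IsPartition f ∧ IsRegular p f ∧ (GSymb p f).map (mullCol p) = GSymb p f

/-- `U_λ`: the nodes of the `p`-rim lying on or above the diagonal. -/
noncomputable def UList (p : ℕ) (f : ℕ → ℕ) : List (ℕ × ℕ) :=
  (pRimList p f).filter fun c => c.1 ≤ c.2

/-- The `p`-rim* of a self-conjugate partition: `U_λ ∪ L_λ`, where `L_λ` is the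
reflection of `U_λ` across the diagonal. -/
noncomputable def rimStar (p : ℕ) (f : ℕ → ℕ) : Finset (ℕ × ℕ) :=
  (UList p f).toFinset ∪ (UList p f).toFinset.image fun c => (c.2, c.1)

/-- `a*`: the number of nodes of the `p`-rim*. -/
noncomputable def aStar (p : ℕ) (f : ℕ → ℕ) : ℕ :=
  (rimStar p f).card

/-- `r*`: the number of nodes of `U_λ`. -/
noncomputable def rStar (p : ℕ) (f : ℕ → ℕ) : ℕ :=
  (UList p f).toFinset.card

/-- `ε* = a* mod 2`. -/
noncomputable def epsStar (p : ℕ) (f : ℕ → ℕ) : ℕ :=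
  aStar p f % 2

/-- `λ^(1)*`: `f` minus its `p`-rim*. -/
noncomputable def removeRimStar (p : ℕ) (f : ℕ → ℕ) : ℕ → ℕ :=
  fun i => f i - ((rimStar p f).filter fun c => c.1 = i).card

/-- The number of columns of the BG-symbol of `f`. -/
noncomputable def stepsStar (p : ℕ) (f : ℕ → ℕ) : ℕ :=
  sInf {k | len ((removeRimStar p)^[k] f) = 0}

/-- The BG-symbol of a self-conjugate partition, recorded as the list of its columns
`(a*_i, r*_i)` for `0 ≤ i ≤ l`. -/
noncomputable def BGSymb (p : ℕ) (f : ℕ → ℕ) : List (ℕ × ℕ) :=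
  (List.range (stepsStar p f)).map fun i =>
    (aStar p ((removeRimStar p)^[i] f), rStar p ((removeRimStar p)^[i] f))

/-- The number of diagonal nodes of `f`, i.e. `max {i : λ_i ≥ i}` in 1-indexed terms. -/
noncomputable def kDiag (f : ℕ → ℕ) : ℕ :=
  Nat.card {i | i < f i}

/-- The sequence of diagonal hook lengths of `f` (padded with zeros). -/
noncomputable def diagHooks (f : ℕ → ℕ) : ℕ → ℕ :=
  fun i => if i < f i then hook f i i else 0

section Partition

variable {f : ℕ → ℕ}

theorem IsPartition.lt_len_iff (hf : IsPartition f) {i : ℕ} : i < len f ↔ 0 < f i := by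
  obtain ⟨hanti, N, hN⟩ := hf
  constructor
  · intro h
    exact Nat.pos_of_ne_zero fun h0 =>
      absurd (Nat.sInf_le (s := {N | f N = 0}) h0) (not_le.mpr h)
  · intro h
    by_contra hle
    have hlen : f (len f) = 0 := Nat.sInf_mem (s := {N | f N = 0}) ⟨N, hN⟩
    have := hanti (not_lt.mp hle)
    omega

theorem conj_eq_of_forall_lt_iff {i n : ℕ} (h : ∀ t, t < n ↔ i < f t) : conj f i = n := by
  have hset : {t | i < f t} = Set.Iio n := by
    ext t
    exact (h t).symm
  rw [conj, hset, Nat.card_coe_set_eq, Set.ncard_Iio_nat]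

theorem IsPartition.lt_conj_iff (hf : IsPartition f) {i j : ℕ} : j < conj f i ↔ i < f j := by
  classical
  obtain ⟨hanti, N, hN⟩ := hf
  have hex : ∃ t, f t ≤ i := ⟨N, by omega⟩
  have key : ∀ t, t < Nat.find hex ↔ i < f t := fun t => by
    constructor
    · exact fun ht => not_le.mp (Nat.find_min hex ht)
    · intro ht
      by_contra hle
      have := hanti (not_lt.mp hle)
      have := Nat.find_spec hex
      omega
  rw [conj_eq_of_forall_lt_iff key, key]

theorem selfConj_of_forall_lt_iff (h : ∀ i j, j < f i ↔ i < f j) : SelfConj f :=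
  funext fun i => conj_eq_of_forall_lt_iff (h i)

theorem SelfConj.lt_comm (hsc : SelfConj f) (hf : IsPartition f) {i j : ℕ} :
    j < f i ↔ i < f j := by
  calc j < f i ↔ j < conj f i := by rw [hsc]
    _ ↔ i < f j := hf.lt_conj_iff

theorem SelfConj.hook_self (hsc : SelfConj f) (i : ℕ) : hook f i i = 2 * (f i - i) - 1 := by
  rw [hook, hsc]
  omega

end Partition

section UpperSymm

variable {e : ℕ → ℕ}

/-- The self-conjugate partition whose diagram is the part of the diagram of `e` on and above
the diagonal together with its reflection. -/
noncomputable def upperSymm (e : ℕ → ℕ) (i : ℕ) : ℕ :=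
  if i < e i then e i else conj e i

theorem lt_upperSymm_iff (he : IsPartition e) {i j : ℕ} :
    j < upperSymm e i ↔ (i ≤ j ∧ j < e i) ∨ (j ≤ i ∧ i < e j) := by
  rcases le_total i j with h | h <;> have := he.1 h <;> unfold upperSymm <;> split_ifs <;>
    (try rw [he.lt_conj_iff]) <;> omega

theorem upperSymm_selfConj (he : IsPartition e) : SelfConj (upperSymm e) :=
  selfConj_of_forall_lt_iff fun i j => by
    rw [lt_upperSymm_iff he, lt_upperSymm_iff he, or_comm]

theorem upperSymm_isPartition (he : IsPartition e) : IsPartition (upperSymm e) := by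
  refine ⟨fun i i' hii' => le_of_forall_lt fun j hj => ?_, e 0, ?_⟩
  · rw [lt_upperSymm_iff he] at hj ⊢
    have := he.1 hii'
    rcases le_total i j with h | h <;> have := he.1 h <;> omega
  · refine Nat.eq_zero_of_not_pos fun h => ?_
    rw [lt_upperSymm_iff he] at h
    have := he.1 (Nat.zero_le (e 0))
    omega

theorem lt_upperSymm_self_iff (he : IsPartition e) {i : ℕ} : i < upperSymm e i ↔ i < e i := by
  rw [lt_upperSymm_iff he]
  omega

theorem hook_upperSymm_self (he : IsPartition e) {i : ℕ} (hi : i < e i) :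
    hook (upperSymm e) i i = 2 * (e i - i) - 1 := by
  rw [(upperSymm_selfConj he).hook_self, upperSymm, if_pos hi]

end UpperSymm

section Segments

theorem _root_.List.getLastD_append {α : Type*} (l l' : List α) (c : α) :
    (l ++ l').getLastD c = l'.getLastD (l.getLastD c) := by
  induction l generalizing c with
  | nil => rfl
  | cons a l ih => simp only [List.cons_append, List.getLastD_cons, ih]

theorem _root_.List.getLastD_take_mem {α : Type*} {l : List α} {k : ℕ} (hk : 0 < k)
    (hl : l ≠ []) (c : α) : (l.take k).getLastD c ∈ l := by
  have := List.length_pos_of_ne_nil hl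
  obtain ⟨x, xs, hx⟩ := List.exists_cons_of_ne_nil
    (List.ne_nil_of_length_pos (by rw [List.length_take]; omega) : l.take k ≠ [])
  rw [hx, List.getLastD_cons]
  exact List.mem_of_mem_take (hx ▸ List.getLastD_mem_cons)

theorem filter_drop_append_eq_right {B X : List (ℕ × ℕ)} {m : ℕ}
    (hB : ∀ y ∈ B, y.1 ≤ m) (hX : ∀ y ∈ X, m < y.1) (k : ℕ) :
    ((B.drop k ++ X).filter fun d => m < d.1) = X := by
  rw [List.filter_append, List.filter_eq_nil_iff.mpr, List.filter_eq_self.mpr,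
    List.nil_append]
  · simpa using hX
  · intro y hy
    simpa using hB y (List.mem_of_mem_drop hy)

/-- The greedy selection of `p`-segments from a list cut into rows: `s` nodes of the current
segment are already taken; a row either completes the segment, and its remaining nodes are
skipped, or is taken entirely. -/
def takeSegments {α : Type*} (p : ℕ) : ℕ → List (List α) → List α
  | _, [] => []
  | s, B :: Bs =>
    B.take (p - s) ++ takeSegments p (if s + B.length < p then s + B.length else 0) Bs

variable {p : ℕ}

theorem takeSegments_eq_nil_of_flatten_eq_nil {α : Type*} {Bs : List (List α)}
    (hne : ∀ B ∈ Bs, B ≠ []) (h : Bs.flatten = []) (s : ℕ) : takeSegments p s Bs = [] := by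
  rw [List.eq_nil_iff_forall_not_mem.mpr fun B hB =>
    hne B hB (List.flatten_eq_nil_iff.mp h B hB)]
  rfl

theorem pRimAux_nil (fuel : ℕ) : pRimAux p fuel [] = [] := by
  cases fuel <;> rfl

theorem pRimAux_eq_of_take_append {L T : List (ℕ × ℕ)} (hnil : L = [] → T = [])
    (h : ∀ fuel c, L.length ≤ fuel + 1 → L.take p ++ pRimAux p fuel ((L.drop p).filter
      fun d => ((L.take p).getLastD c).1 < d.1) = T)
    {fuel : ℕ} (hfuel : L.length ≤ fuel) : pRimAux p fuel L = T := by
  match L, fuel with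
  | [], _ => rw [pRimAux_nil, hnil rfl]
  | x :: xs, fuel + 1 => exact h fuel x (by simpa using hfuel)
  | _ :: _, 0 => simp at hfuel

variable (hp : 0 < p) {Bs : List (List (ℕ × ℕ))} (hne : ∀ B ∈ Bs, B ≠ [])
  (hrow : ∀ B ∈ Bs, ∀ x ∈ B, ∀ y ∈ B, x.1 = y.1)
  (hlt : Bs.Pairwise fun B C => ∀ x ∈ B, ∀ y ∈ C, x.1 < y.1)
include hp hne hrow hlt

theorem take_append_pRimAux_flatten {s fuel : ℕ} (c : ℕ × ℕ) (hs : s < p)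
    (hfuel : Bs.flatten.length ≤ fuel + 1) :
    Bs.flatten.take (p - s) ++ pRimAux p fuel ((Bs.flatten.drop (p - s)).filter
      fun d => ((Bs.flatten.take (p - s)).getLastD c).1 < d.1) = takeSegments p s Bs := by
  induction Bs generalizing s fuel c with
  | nil => simp [pRimAux_nil, takeSegments]
  | cons B Bs ih =>
    simp only [List.mem_cons, forall_eq_or_imp] at hne hrow
    rw [List.pairwise_cons] at hlt
    have ih' := @ih hne.2 hrow.2 hlt.2
    rw [List.flatten_cons, List.length_append] at hfuel
    rw [List.flatten_cons, takeSegments]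
    have hB := List.length_pos_of_ne_nil hne.1
    split_ifs with hsmall
    · rw [List.take_append, List.drop_append, List.take_of_length_le (l := B) (by omega),
        List.drop_eq_nil_of_le (as := B) (by omega), List.nil_append, Nat.sub_sub,
        List.getLastD_append, List.append_assoc, ih' _ hsmall (by omega)]
    · rw [List.take_append_of_le_length (by omega), List.drop_append_of_le_length (by omega)]
      have hlast := List.getLastD_take_mem (by omega) hne.1 c (k := p - s)
      rw [filter_drop_append_eq_right (fun y hy => (hrow.1 _ hlast y hy).ge)
        (fun y hy => ?_)]
      · congr 1
        exact pRimAux_eq_of_take_append (takeSegments_eq_nil_of_flatten_eq_nil hne.2 · 0)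
          (fun fuel c h => by simpa using ih' c hp h) (by omega)
      · obtain ⟨C, hC, hyC⟩ := List.mem_flatten.mp hy
        exact hlt.1 C hC _ hlast y hyC

theorem pRimAux_flatten {fuel : ℕ} (hfuel : Bs.flatten.length ≤ fuel) :
    pRimAux p fuel Bs.flatten = takeSegments p 0 Bs :=
  pRimAux_eq_of_take_append (takeSegments_eq_nil_of_flatten_eq_nil hne · 0)
    (fun fuel c h => by simpa using take_append_pRimAux_flatten hp hne hrow hlt c hp h) hfuel

end Segments

section PRim

variable {p : ℕ} {f : ℕ → ℕ}

def rimLength (f : ℕ → ℕ) (i : ℕ) : ℕ :=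
  f i - (f (i + 1) - 1)

def rimRow (f : ℕ → ℕ) (i : ℕ) : List (ℕ × ℕ) :=
  (List.range (rimLength f i)).map fun k => (i, f i - 1 - k)

/-- The number of nodes of the current `p`-segment lying in rows above row `i`. -/
def segmentFill (p : ℕ) (f : ℕ → ℕ) : ℕ → ℕ
  | 0 => 0
  | i + 1 =>
    if segmentFill p f i + rimLength f i < p then segmentFill p f i + rimLength f i else 0

def pRimLeft (p : ℕ) (f : ℕ → ℕ) (i : ℕ) : ℕ :=
  f i - min (rimLength f i) (p - segmentFill p f i)

theorem rimList_eq_flatten (f : ℕ → ℕ) :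
    rimList f = ((List.range (len f)).map (rimRow f)).flatten :=
  rfl

theorem length_rimRow (f : ℕ → ℕ) (i : ℕ) : (rimRow f i).length = rimLength f i := by
  simp [rimRow]

theorem fst_of_mem_rimRow {i : ℕ} {x : ℕ × ℕ} (hx : x ∈ rimRow f i) : x.1 = i := by
  obtain ⟨k, -, rfl⟩ := List.mem_map.mp hx
  rfl

theorem mem_take_rimRow {i k a b : ℕ} :
    (a, b) ∈ (rimRow f i).take k ↔ a = i ∧ f i - min k (rimLength f i) ≤ b ∧ b < f i := by
  have hR : rimLength f i ≤ f i := Nat.sub_le _ _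
  simp only [rimRow, ← List.map_take, List.take_range, List.mem_map, List.mem_range,
    Prod.mk.injEq]
  constructor
  · rintro ⟨t, ht, rfl, rfl⟩
    omega
  · rintro ⟨rfl, h1, h2⟩
    exact ⟨f a - 1 - b, by omega, rfl, by omega⟩

theorem one_le_rimLength (hf : Antitone f) {i : ℕ} (h : 0 < f i) : 1 ≤ rimLength f i := by
  have := hf (Nat.le_add_right i 1)
  unfold rimLength
  omega

theorem segmentFill_lt (hp : 0 < p) (f : ℕ → ℕ) : ∀ i, segmentFill p f i < p
  | 0 => hp
  | i + 1 => by
    rw [segmentFill]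
    split_ifs <;> omega

theorem takeSegments_rimRow (p : ℕ) (f : ℕ → ℕ) (n : ℕ) : ∀ r,
    takeSegments p (segmentFill p f r) ((List.range' r n).map (rimRow f)) =
      (List.range' r n).flatMap fun i => (rimRow f i).take (p - segmentFill p f i) := by
  induction n with
  | zero => intro r; rfl
  | succ n ih =>
    intro r
    simp only [List.range'_succ, List.map_cons, List.flatMap_cons, takeSegments, length_rimRow]
    rw [← ih (r + 1)]
    rfl

theorem pRimList_eq_flatMap (hf : IsPartition f) (hp : 0 < p) :
    pRimList p f =
      (List.range (len f)).flatMap fun i => (rimRow f i).take (p - segmentFill p f i) := by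
  have hne : ∀ B ∈ (List.range (len f)).map (rimRow f), B ≠ [] := by
    simp only [List.mem_map, List.mem_range]
    rintro _ ⟨i, hi, rfl⟩
    apply List.ne_nil_of_length_pos
    rw [length_rimRow]
    exact one_le_rimLength hf.1 (hf.lt_len_iff.mp hi)
  have hrow :
      ∀ B ∈ (List.range (len f)).map (rimRow f), ∀ x ∈ B, ∀ y ∈ B, x.1 = y.1 := by
    simp only [List.mem_map]
    rintro _ ⟨i, -, rfl⟩ x hx y hy
    rw [fst_of_mem_rimRow hx, fst_of_mem_rimRow hy]
  have hlt : ((List.range (len f)).map (rimRow f)).Pairwise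
      fun B C => ∀ x ∈ B, ∀ y ∈ C, x.1 < y.1 :=
    List.pairwise_map.mpr <| List.pairwise_lt_range.imp fun hij x hx y hy => by
      rwa [fst_of_mem_rimRow hx, fst_of_mem_rimRow hy]
  rw [pRimList, rimList_eq_flatten, pRimAux_flatten hp hne hrow hlt le_rfl,
    List.range_eq_range', ← takeSegments_rimRow]
  rfl

theorem mem_pRimList (hf : IsPartition f) (hp : 0 < p) {a b : ℕ} :
    (a, b) ∈ pRimList p f ↔ pRimLeft p f a ≤ b ∧ b < f a := by
  rw [pRimList_eq_flatMap hf hp, List.mem_flatMap]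
  simp only [List.mem_range, mem_take_rimRow]
  unfold pRimLeft
  constructor
  · rintro ⟨i, -, rfl, h⟩
    omega
  · intro h
    exact ⟨a, hf.lt_len_iff.mpr (by omega), rfl, by omega⟩

theorem pRimLeft_le (p : ℕ) (f : ℕ → ℕ) (i : ℕ) : pRimLeft p f i ≤ f i :=
  Nat.sub_le _ _

theorem pRimLeft_isPartition (hf : IsPartition f) (hp : 0 < p) :
    IsPartition (pRimLeft p f) := by
  refine ⟨antitone_nat_of_succ_le fun i => ?_, ?_⟩
  · have := hf.1 (Nat.le_add_right i 1)
    have := hf.1 (Nat.le_add_right (i + 1) 1)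
    have := segmentFill_lt hp f (i + 1)
    unfold pRimLeft rimLength
    omega
  · obtain ⟨N, hN⟩ := hf.2
    exact ⟨N, by have := pRimLeft_le p f N; omega⟩

theorem exists_segment_start (hf : Antitone f) :
    ∀ {i}, i < f i → ∃ r ≤ i, f r - r = f i - i + segmentFill p f i
  | 0, _ => ⟨0, le_rfl, rfl⟩
  | i + 1, hi => by
    have := hf (Nat.le_add_right i 1)
    rw [segmentFill]
    split_ifs
    · obtain ⟨r, hr, hr'⟩ := exists_segment_start hf (i := i) (by omega)
      exact ⟨r, by omega, by unfold rimLength; omega⟩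
    · exact ⟨i + 1, le_rfl, by omega⟩

theorem exists_sub_eq_of_lt_pRimLeft (hf : Antitone f) (hp : 0 < p) {i : ℕ}
    (hi : i < pRimLeft p f i) :
    ∃ r, r < f r ∧ (f r - r = pRimLeft p f i - i ∨ f r - r = pRimLeft p f i - i + p) := by
  have := hf (Nat.le_add_right i 1)
  have := pRimLeft_le p f i
  have := segmentFill_lt hp f i
  by_cases h : rimLength f i ≤ p - segmentFill p f i
  · unfold pRimLeft rimLength at *
    exact ⟨i + 1, by omega, Or.inl (by omega)⟩
  · obtain ⟨r, hr, hr'⟩ := exists_segment_start (p := p) hf (i := i) (by omega)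
    have := hf hr
    unfold pRimLeft at *
    exact ⟨r, by omega, Or.inr (by omega)⟩

end PRim

section RimStar

variable {p : ℕ} {f : ℕ → ℕ}

theorem mem_rimStar_iff (p : ℕ) (f : ℕ → ℕ) {i j : ℕ} :
    (i, j) ∈ rimStar p f ↔ (i, j) ∈ UList p f ∨ (j, i) ∈ UList p f := by
  rw [rimStar, Finset.mem_union, Finset.mem_image, List.mem_toFinset]
  constructor
  · rintro (h | ⟨⟨a, b⟩, hab, he⟩)
    · exact Or.inl h
    · obtain ⟨rfl, rfl⟩ := Prod.mk.inj he
      exact Or.inr (List.mem_toFinset.mp hab)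
  · rintro (h | h)
    · exact Or.inl h
    · exact Or.inr ⟨(j, i), List.mem_toFinset.mpr h, rfl⟩

theorem mem_rimStar (hf : IsPartition f) (hsc : SelfConj f) (hp : 0 < p) {i j : ℕ} :
    (i, j) ∈ rimStar p f ↔ upperSymm (pRimLeft p f) i ≤ j ∧ j < f i := by
  have hsymm : j < f i ↔ i < f j := hsc.lt_comm hf
  rw [← not_lt, lt_upperSymm_iff (pRimLeft_isPartition hf hp), mem_rimStar_iff]
  simp only [UList, List.mem_filter, mem_pRimList hf hp, decide_eq_true_eq]
  rcases lt_trichotomy i j with h | rfl | h <;> omega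

theorem removeRimStar_eq_upperSymm (hf : IsPartition f) (hsc : SelfConj f) (hp : 0 < p) :
    removeRimStar p f = upperSymm (pRimLeft p f) := by
  funext i
  have hle : upperSymm (pRimLeft p f) i ≤ f i := le_of_forall_lt fun j hj => by
    rw [lt_upperSymm_iff (pRimLeft_isPartition hf hp)] at hj
    have := pRimLeft_le p f i
    have := pRimLeft_le p f j
    have := hsc.lt_comm hf (i := i) (j := j)
    omega
  have hrow : (rimStar p f).filter (fun c => c.1 = i) =
      (Finset.Ico (upperSymm (pRimLeft p f) i) (f i)).map
        ⟨(i, ·), Prod.mk_right_injective i⟩ := by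
    ext ⟨a, b⟩
    simp only [Finset.mem_filter, Finset.mem_map, Finset.mem_Ico, Function.Embedding.coeFn_mk,
      Prod.mk.injEq]
    constructor
    · rintro ⟨h, rfl⟩
      exact ⟨b, (mem_rimStar hf hsc hp).mp h, rfl, rfl⟩
    · rintro ⟨b, h, rfl, rfl⟩
      exact ⟨(mem_rimStar hf hsc hp).mpr h, rfl⟩
  rw [removeRimStar, hrow, Finset.card_map, Nat.card_Ico]
  omega

theorem exists_dvd_hook_of_dvd_hook_upperSymm (hf : IsPartition f) (hsc : SelfConj f)
    (hp : 0 < p) {i : ℕ} (hi : i < upperSymm (pRimLeft p f) i)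
    (hdvd : p ∣ hook (upperSymm (pRimLeft p f)) i i) : ∃ r, r < f r ∧ p ∣ hook f r r := by
  have he := pRimLeft_isPartition hf hp
  rw [lt_upperSymm_self_iff he] at hi
  rw [hook_upperSymm_self he hi] at hdvd
  obtain ⟨r, hr, harm | harm⟩ := exists_sub_eq_of_lt_pRimLeft hf.1 hp hi
  all_goals refine ⟨r, hr, ?_⟩
  · rwa [hsc.hook_self, harm]
  · rw [hsc.hook_self, harm, show 2 * (pRimLeft p f i - i + p) - 1 =
      2 * (pRimLeft p f i - i) - 1 + 2 * p by omega]
    exact dvd_add hdvd (dvd_mul_left p 2)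

end RimStar

theorem removeRimStar_isBG_general (p : ℕ) (hp : p.Prime)
    (f : ℕ → ℕ) (hf : IsBG p f) :
    IsBG p (removeRimStar p f) := by
  obtain ⟨hpart, hsc, hhook⟩ := hf
  have he := pRimLeft_isPartition hpart hp.pos
  rw [removeRimStar_eq_upperSymm hpart hsc hp.pos]
  refine ⟨upperSymm_isPartition he, upperSymm_selfConj he, fun i hi hdvd => ?_⟩
  obtain ⟨r, hr, hdvd'⟩ := exists_dvd_hook_of_dvd_hook_upperSymm hpart hsc hp.pos hi hdvd
  exact hhook r hr hdvd'

/-- Lemma: removing the `p`-rim* of a BG-partition yields a BG-partition. -/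
theorem removeRimStar_isBG (p : ℕ) (hp : p.Prime) (hodd : Odd p)
    (f : ℕ → ℕ) (hf : IsBG p f) :
    IsBG p (removeRimStar p f) :=
  removeRimStar_isBG_general p hp f hf

end Mull
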